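/- Let R be the resolvent kernel. For every complex number s with Re s > 1, ∫_1^∞ R(y)·y^{−s}·dy/y = k̃(s)/(1 + k̃(s)), where k̃(s) := ∫_1^∞ 2y^{−s}/(1+y)² dy; equivalently, the Mellin transform of R at s equals 1 − 1/(s·∫_0^1 2t^{s−1}/(1+t) dt). -/

import Mathlib

open MeasureTheory

/-- `R` is a continuous solution on `[1,∞)` of the resolvent equation
`R + R ⋆ k = k` with kernel `k(y) = 2y/(1+y)²`. -/
def IsResolvent (R : ℝ → ℝ) : Prop :=
  ContinuousOn R (Set.Ici 1) ∧
    ∀ x : ℝ, 1 ≤ x →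
      R x + ∫ y in (1 : ℝ)..x, R (x / y) * (2 * y / (1 + y) ^ 2) / y =
        2 * x / (1 + x) ^ 2

section Aux
open Set Filter

lemma aux_integrableOn_of_bound {f : ℝ → ℂ} (hm : AEStronglyMeasurable f (volume.restrict (Ioi 1)))
    {σ : ℝ} (hσ : σ < -1) (C : ℝ) (hb : ∀ y : ℝ, 1 < y → ‖f y‖ ≤ C * y ^ σ) :
    IntegrableOn f (Ioi 1) := by
  refine Integrable.mono' ((integrableOn_Ioi_rpow_of_lt hσ one_pos).const_mul C) hm ?_
  exact (ae_restrict_iff' measurableSet_Ioi).2 (ae_of_all _ fun y hy => hb y hy)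

lemma aux_norm_cpow {y : ℝ} (hy : 0 < y) (t : ℂ) : ‖(y:ℂ) ^ t‖ = y ^ t.re := by
  rw [Complex.norm_cpow_eq_rpow_re_of_pos hy]

lemma aux_cont_cpow (t : ℂ) : ContinuousOn (fun y : ℝ => (y:ℂ) ^ t) (Ici 1) := fun x hx =>
  (Complex.continuousAt_ofReal_cpow_const _ _ (Or.inr (lt_of_lt_of_le one_pos hx).ne')).continuousWithinAt

variable {s : ℂ}

lemma aux_cont_K (s : ℂ) :
    ContinuousOn (fun y : ℝ => 2 * (y:ℂ) ^ (-s) / (1 + (y:ℂ)) ^ 2) (Ici 1) := by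
  apply ContinuousOn.div (continuousOn_const.mul (aux_cont_cpow (-s)))
  · exact ((continuous_const.add Complex.continuous_ofReal).pow 2).continuousOn
  · intro x hx
    have : (0:ℝ) < 1 + x := by have := hx.out; linarith
    have h2 : (1 + (x:ℂ)) ≠ 0 := by
      intro h
      have := congrArg Complex.re h
      simp at this
      linarith
    exact pow_ne_zero 2 h2

lemma aux_norm_K {y : ℝ} (hy : 1 < y) :
    ‖2 * (y:ℂ) ^ (-s) / (1 + (y:ℂ)) ^ 2‖ = 2 * y ^ (-s.re) / (1 + y) ^ 2 := by
  have h0 : (0:ℝ) < y := one_pos.trans hy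
  have h1 : (0:ℝ) < 1 + y := by linarith
  rw [norm_div, norm_mul, aux_norm_cpow h0, Complex.neg_re]
  have : (1 + (y:ℂ)) = ((1 + y : ℝ) : ℂ) := by push_cast; ring
  rw [this, norm_pow, Complex.norm_real, Real.norm_of_nonneg h1.le]
  simp

lemma aux_integrable_K (hs : 1 < s.re) :
    IntegrableOn (fun y : ℝ => 2 * (y:ℂ) ^ (-s) / (1 + (y:ℂ)) ^ 2) (Ioi 1) := by
  refine aux_integrableOn_of_bound
    (((aux_cont_K s).mono Ioi_subset_Ici_self).aestronglyMeasurable measurableSet_Ioi)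
    (by linarith : -s.re < -1) 2 fun y hy => ?_
  rw [aux_norm_K hy]
  have h0 : (0:ℝ) < y := one_pos.trans hy
  have h2 : (1:ℝ) ≤ (1+y)^2 := by nlinarith
  calc 2 * y ^ (-s.re) / (1 + y) ^ 2 ≤ 2 * y ^ (-s.re) / 1 := by
        apply div_le_div_of_nonneg_left _ one_pos h2
        positivity
    _ = 2 * y ^ (-s.re) := by ring

lemma aux_one_add_ne {x : ℝ} (hx : 1 ≤ x) : (1 + (x:ℂ)) ≠ 0 := by
  intro h
  have := congrArg Complex.re h
  simp at this
  linarith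

lemma aux_cont_J (s : ℂ) :
    ContinuousOn (fun y : ℝ => 2 * (y:ℂ) ^ (-s) / (1 + (y:ℂ))) (Ici 1) := by
  apply ContinuousOn.div (continuousOn_const.mul (aux_cont_cpow (-s)))
  · exact (continuous_const.add Complex.continuous_ofReal).continuousOn
  · exact fun x hx => aux_one_add_ne hx

lemma aux_integrable_J (hs : 1 < s.re) :
    IntegrableOn (fun y : ℝ => 2 * (y:ℂ) ^ (-s) / (1 + (y:ℂ))) (Ioi 1) := by
  refine aux_integrableOn_of_bound
    (((aux_cont_J s).mono Ioi_subset_Ici_self).aestronglyMeasurable measurableSet_Ioi)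
    (by linarith : -s.re < -1) 2 fun y hy => ?_
  have h0 : (0:ℝ) < y := one_pos.trans hy
  have h1 : (0:ℝ) < 1 + y := by linarith
  have : (1 + (y:ℂ)) = ((1 + y : ℝ) : ℂ) := by push_cast; ring
  rw [norm_div, norm_mul, aux_norm_cpow h0, Complex.neg_re, this, Complex.norm_real,
    Real.norm_of_nonneg h1.le]
  simp only [Complex.norm_ofNat]
  calc 2 * y ^ (-s.re) / (1 + y) ≤ 2 * y ^ (-s.re) / 1 := by
        apply div_le_div_of_nonneg_left _ one_pos (by linarith)
        positivity
    _ = 2 * y ^ (-s.re) := by ring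

lemma aux_cont_M {R : ℝ → ℝ} (hRc : ContinuousOn R (Ici 1)) (s : ℂ) :
    ContinuousOn (fun y : ℝ => (R y : ℂ) * (y:ℂ) ^ (-s) / (y:ℂ)) (Ici 1) := by
  apply ContinuousOn.div
  · exact (Complex.continuous_ofReal.comp_continuousOn hRc).mul (aux_cont_cpow (-s))
  · exact Complex.continuous_ofReal.continuousOn
  · intro x hx
    simpa using (lt_of_lt_of_le one_pos hx).ne'

lemma aux_integrable_M {R : ℝ → ℝ} (hRc : ContinuousOn R (Ici 1))
    (hRbd : ∀ y : ℝ, 1 ≤ y → |R y| ≤ 2 * y) (hs : 1 < s.re) :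
    IntegrableOn (fun y : ℝ => (R y : ℂ) * (y:ℂ) ^ (-s) / (y:ℂ)) (Ioi 1) := by
  refine aux_integrableOn_of_bound
    (((aux_cont_M hRc s).mono Ioi_subset_Ici_self).aestronglyMeasurable measurableSet_Ioi)
    (by linarith : -s.re < -1) 2 fun y hy => ?_
  have h0 : (0:ℝ) < y := one_pos.trans hy
  rw [norm_div, norm_mul, aux_norm_cpow h0, Complex.neg_re, Complex.norm_real,
    Complex.norm_real, Real.norm_of_nonneg h0.le, Real.norm_eq_abs]
  rw [div_le_iff₀ h0]
  calc |R y| * y ^ (-s.re) ≤ (2 * y) * y ^ (-s.re) :=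
        mul_le_mul_of_nonneg_right (hRbd y hy.le) (by positivity)
    _ = 2 * y ^ (-s.re) * y := by ring


lemma aux_cont_g : ContinuousOn (fun y : ℝ => 2 / (y * (1 + y) ^ 2)) (Ici 1) := by
  apply continuousOn_const.div (continuousOn_id.mul (((continuous_const.add continuous_id).pow 2).continuousOn))
  intro x hx
  have hx' : (1:ℝ) ≤ x := hx
  have hx0 : (0:ℝ) < x := by linarith
  show x * (1 + x) ^ 2 ≠ 0
  positivity

lemma aux_integrable_g : IntegrableOn (fun y : ℝ => 2 / (y * (1 + y) ^ 2)) (Ioi 1) := by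
  refine Integrable.mono' ((integrableOn_Ioi_rpow_of_lt (by norm_num : (-3:ℝ) < -1) one_pos).const_mul 2)
    ((aux_cont_g.mono Ioi_subset_Ici_self).aestronglyMeasurable measurableSet_Ioi) ?_
  refine (ae_restrict_iff' measurableSet_Ioi).2 (ae_of_all _ fun y (hy : 1 < y) => ?_)
  have h0 : (0:ℝ) < y := one_pos.trans hy
  have h1 : y^3 ≤ y * (1+y)^2 := by nlinarith
  rw [Real.norm_of_nonneg (by positivity), Real.rpow_neg h0.le]
  have : y ^ (3:ℝ) = y ^ (3:ℕ) := Real.rpow_natCast y 3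
  rw [this, div_le_iff₀ (by positivity)]
  calc (2:ℝ) = 2 * (y^3)⁻¹ * y^3 := by field_simp
    _ ≤ 2 * (y^3)⁻¹ * (y * (1+y)^2) := by
        apply mul_le_mul_of_nonneg_left h1 (by positivity)

lemma aux_integral_g : ∫ y in Ioi (1:ℝ), 2 / (y * (1 + y) ^ 2) = 2 * Real.log 2 - 1 := by
  have hderiv : ∀ y ∈ Ici (1:ℝ), HasDerivAt (fun y : ℝ => 2 * Real.log y - 2 * Real.log (1 + y) + 2 / (1 + y))
      (2 / (y * (1 + y) ^ 2)) y := by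
    intro y hy
    have h0 : (0:ℝ) < y := lt_of_lt_of_le one_pos hy
    have h1 : (0:ℝ) < 1 + y := by linarith
    have d1 : HasDerivAt (fun y : ℝ => 2 * Real.log y) (2 * y⁻¹) y :=
      (Real.hasDerivAt_log h0.ne').const_mul 2
    have d2 : HasDerivAt (fun y : ℝ => 1 + y) 1 y := (hasDerivAt_id y).const_add 1
    have d3 : HasDerivAt (fun y : ℝ => 2 * Real.log (1 + y)) (2 * ((1+y)⁻¹ * 1)) y :=
      (((Real.hasDerivAt_log h1.ne').comp y d2)).const_mul 2
    have d4 : HasDerivAt (fun y : ℝ => 2 / (1 + y)) (2 * (-(1 * ((1+y)^2)⁻¹))) y := by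
      simpa [div_eq_mul_inv] using (d2.inv h1.ne').const_mul 2
    convert (d1.sub d3).add d4 using 1
    · rfl
    · rfl
    · rfl
    field_simp
    ring
  have htend : Tendsto (fun y : ℝ => 2 * Real.log y - 2 * Real.log (1 + y) + 2 / (1 + y)) atTop (nhds 0) := by
    have h1 : Tendsto (fun y : ℝ => 1 + y) atTop atTop := tendsto_atTop_add_const_left _ 1 tendsto_id
    have h2 : Tendsto (fun y : ℝ => 2 / (1 + y)) atTop (nhds 0) := by
      simpa [div_eq_mul_inv] using h1.inv_tendsto_atTop.const_mul (2:ℝ)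
    have h3 : Tendsto (fun y : ℝ => 1 + y⁻¹) atTop (nhds 1) := by
      simpa using (tendsto_const_nhds (x := (1:ℝ))).add tendsto_inv_atTop_zero
    have h4 : Tendsto (fun y : ℝ => 2 * Real.log y - 2 * Real.log (1 + y)) atTop (nhds 0) := by
      have h5 : Tendsto (fun y : ℝ => -(2 * Real.log (1 + y⁻¹))) atTop (nhds 0) := by
        have := ((Real.continuousAt_log one_ne_zero).tendsto.comp h3)
        simp only [Real.log_one] at this
        simpa using (this.const_mul (2:ℝ)).neg
      refine h5.congr' (eventually_atTop.2 ⟨1, fun y hy => ?_⟩)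
      have h0 : (0:ℝ) < y := lt_of_lt_of_le one_pos hy
      have h1' : (0:ℝ) < 1 + y := by linarith
      show -(2 * Real.log (1 + y⁻¹)) = 2 * Real.log y - 2 * Real.log (1 + y)
      rw [show (1 + y⁻¹) = (1+y)/y by field_simp; ring, Real.log_div h1'.ne' h0.ne']
      ring
    simpa using h4.add h2
  have := integral_Ioi_of_hasDerivAt_of_tendsto (a := 1)
    ((hderiv 1 self_mem_Ici).continuousAt.continuousWithinAt) (fun x hx => hderiv x (mem_Ici.2 (le_of_lt hx)))
    aux_integrable_g htend
  rw [this]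
  simp [Real.log_one]
  ring

lemma aux_norm_K_lt {s : ℂ} (hs : 1 < s.re) :
    ‖∫ y in Ioi (1:ℝ), 2 * (y:ℂ) ^ (-s) / (1 + (y:ℂ)) ^ 2‖ < 1 := by
  have step1 : ‖∫ y in Ioi (1:ℝ), 2 * (y:ℂ) ^ (-s) / (1 + (y:ℂ)) ^ 2‖
      ≤ ∫ y in Ioi (1:ℝ), ‖2 * (y:ℂ) ^ (-s) / (1 + (y:ℂ)) ^ 2‖ :=
    norm_integral_le_integral_norm _
  have step2 : ∫ y in Ioi (1:ℝ), ‖2 * (y:ℂ) ^ (-s) / (1 + (y:ℂ)) ^ 2‖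
      ≤ ∫ y in Ioi (1:ℝ), 2 / (y * (1 + y) ^ 2) := by
    refine setIntegral_mono_on (aux_integrable_K hs).norm aux_integrable_g measurableSet_Ioi
      fun y hy => ?_
    have hy' : (1:ℝ) < y := hy
    have h0 : (0:ℝ) < y := one_pos.trans hy'
    have h1 : (0:ℝ) < 1 + y := by linarith
    rw [aux_norm_K hy']
    have hr : y ^ (-s.re) ≤ y⁻¹ := by
      have := Real.rpow_le_rpow_of_exponent_le hy'.le (by linarith : -s.re ≤ -1)
      rwa [Real.rpow_neg_one] at this
    rw [div_le_div_iff₀ (by positivity) (by positivity)]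
    calc 2 * y ^ (-s.re) * (y * (1+y)^2) ≤ 2 * y⁻¹ * (y * (1+y)^2) := by
          apply mul_le_mul_of_nonneg_right (by nlinarith) (by positivity)
      _ = 2 * ((1+y)^2) := by field_simp
      _ = 2 * (1+y)^2 := by ring
  have : (2:ℝ) * Real.log 2 - 1 < 1 := by
    have := Real.log_two_lt_d9
    linarith
  calc ‖_‖ ≤ _ := step1
    _ ≤ _ := step2
    _ = 2 * Real.log 2 - 1 := aux_integral_g
    _ < 1 := this

lemma aux_one_add_K_ne {s : ℂ} (hs : 1 < s.re) :
    1 + (∫ y in Ioi (1:ℝ), 2 * (y:ℂ) ^ (-s) / (1 + (y:ℂ)) ^ 2) ≠ 0 := by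
  intro h
  have h2 : (∫ y in Ioi (1:ℝ), 2 * (y:ℂ) ^ (-s) / (1 + (y:ℂ)) ^ 2) = -1 := by
    linear_combination h
  have := aux_norm_K_lt hs
  rw [h2] at this
  simp at this


lemma aux_fubini {R : ℝ → ℝ} (hRc : ContinuousOn R (Set.Ici 1))
    (hRbd : ∀ y : ℝ, 1 ≤ y → |R y| ≤ 2 * y) {s : ℂ} (hs : 1 < s.re) :
    (∫ x in Ioi (1:ℝ), ((∫ y in (1:ℝ)..x, R (x/y) * (2*y/(1+y)^2) / y : ℝ) : ℂ)
        * ((x:ℂ)^(-s) / (x:ℂ)))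
      = (∫ y in Ioi (1:ℝ), (R y : ℂ) * (y:ℂ)^(-s) / (y:ℂ))
        * (∫ y in Ioi (1:ℝ), 2*(y:ℂ)^(-s)/((1+(y:ℂ))^2)) := by
  classical
  set T : Set (ℝ×ℝ) := {p | 1 ≤ p.2 ∧ p.2 ≤ p.1} with hTdef
  have hTmeas : MeasurableSet T := by
    apply MeasurableSet.inter
    · exact measurableSet_le measurable_const measurable_snd
    · exact measurableSet_le measurable_snd measurable_fst
  set f : ℝ×ℝ → ℂ := fun p =>
    ((R (p.1/p.2) * (2*p.2/(1+p.2)^2) / p.2 : ℝ) : ℂ) * ((p.1:ℂ)^(-s) / (p.1:ℂ)) with hfdef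
  set F : ℝ×ℝ → ℂ := T.indicator f with hFdef
  set μ : Measure (ℝ×ℝ) := (volume.restrict (Ioi 1)).prod (volume.restrict (Ioi 1)) with hμdef
  -- continuity of f on T
  have hfc : ContinuousOn f T := by
    have hdiv : ContinuousOn (fun p : ℝ×ℝ => p.1 / p.2) T := by
      apply ContinuousOn.div continuous_fst.continuousOn continuous_snd.continuousOn
      intro p hp
      have := hp.1
      intro h; rw [h] at this; linarith
    have hmap : MapsTo (fun p : ℝ×ℝ => p.1 / p.2) T (Ici 1) := by
      intro p hp
      have h1 : (0:ℝ) < p.2 := lt_of_lt_of_le one_pos hp.1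
      exact (one_le_div h1).2 hp.2
    apply ContinuousOn.mul
    · apply Complex.continuous_ofReal.comp_continuousOn
      apply ContinuousOn.div
      · apply ContinuousOn.mul (hRc.comp hdiv hmap)
        apply ContinuousOn.div (continuous_const.mul continuous_snd).continuousOn
          ((continuous_const.add continuous_snd).pow 2).continuousOn
        intro p hp
        have h1 : (0:ℝ) < p.2 := lt_of_lt_of_le one_pos hp.1
        show (1 + p.2) ^ 2 ≠ 0
        positivity
      · exact continuous_snd.continuousOn
      · intro p hp
        have h1 : (0:ℝ) < p.2 := lt_of_lt_of_le one_pos hp.1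
        exact h1.ne'
    · apply ContinuousOn.div
      · intro p hp
        have h1 : (0:ℝ) < p.1 := lt_of_lt_of_le one_pos (hp.1.trans hp.2)
        exact ((Complex.continuousAt_ofReal_cpow_const _ _ (Or.inr h1.ne')).comp
          continuous_fst.continuousAt).continuousWithinAt
      · exact (Complex.continuous_ofReal.comp continuous_fst).continuousOn
      · intro p hp
        have h1 : (0:ℝ) < p.1 := lt_of_lt_of_le one_pos (hp.1.trans hp.2)
        simpa using h1.ne'
  have hμr : μ = (volume : Measure (ℝ×ℝ)).restrict (Ioi 1 ×ˢ Ioi 1) := by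
    rw [hμdef, Measure.prod_restrict, ← Measure.volume_eq_prod]
  -- integrability of F
  have hFmeas : AEStronglyMeasurable F μ := by
    rw [hFdef, aestronglyMeasurable_indicator_iff hTmeas]
    have h1 : AEStronglyMeasurable f ((volume : Measure (ℝ×ℝ)).restrict T) :=
      hfc.aestronglyMeasurable hTmeas
    apply h1.mono_measure
    rw [hμr, Measure.restrict_restrict hTmeas]
    exact Measure.restrict_mono inter_subset_left le_rfl
  have hFint : Integrable F μ := by
    have hB : Integrable (fun p : ℝ×ℝ => (4 * p.1 ^ (-s.re)) * p.2 ^ (-3:ℝ)) μ := by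
      rw [hμdef]
      exact Integrable.mul_prod (L := ℝ)
        ((integrableOn_Ioi_rpow_of_lt (by linarith : -s.re < -1) one_pos).const_mul 4)
        (integrableOn_Ioi_rpow_of_lt (by norm_num : (-3:ℝ) < -1) one_pos)
    refine hB.mono' hFmeas ?_
    rw [hμr]
    refine (ae_restrict_iff' (measurableSet_Ioi.prod measurableSet_Ioi)).2
      (ae_of_all _ fun p hp => ?_)
    obtain ⟨hx1, hy1⟩ := hp
    have hx1 : (1:ℝ) < p.1 := hx1
    have hy1 : (1:ℝ) < p.2 := hy1
    have hx0 : (0:ℝ) < p.1 := one_pos.trans hx1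
    have hy0 : (0:ℝ) < p.2 := one_pos.trans hy1
    have hB0 : (0:ℝ) ≤ 4 * p.1 ^ (-s.re) * p.2 ^ (-3:ℝ) := by positivity
    by_cases hpT : p ∈ T
    · rw [hFdef, Set.indicator_of_mem hpT, hfdef]
      have hxy1 : (1:ℝ) ≤ p.1 / p.2 := (one_le_div hy0).2 hpT.2
      have e1 : ‖((R (p.1/p.2) * (2*p.2/(1+p.2)^2) / p.2 : ℝ) : ℂ)‖
          = |R (p.1/p.2)| * (2*p.2/(1+p.2)^2) / p.2 := by
        rw [Complex.norm_real, Real.norm_eq_abs, abs_div, abs_mul,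
          abs_of_nonneg (by positivity : (0:ℝ) ≤ 2*p.2/(1+p.2)^2), abs_of_nonneg hy0.le]
      have e2 : ‖(p.1:ℂ)^(-s) / (p.1:ℂ)‖ = p.1 ^ (-s.re) / p.1 := by
        rw [norm_div, aux_norm_cpow hx0, Complex.neg_re, Complex.norm_real,
          Real.norm_of_nonneg hx0.le]
      rw [norm_mul, e1, e2]
      have hbd1 : |R (p.1/p.2)| ≤ 2 * (p.1/p.2) := hRbd _ hxy1
      calc |R (p.1/p.2)| * (2*p.2/(1+p.2)^2) / p.2 * (p.1 ^ (-s.re) / p.1)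
          ≤ (2*(p.1/p.2)) * (2*p.2/(1+p.2)^2) / p.2 * (p.1 ^ (-s.re) / p.1) := by
            gcongr
        _ = 4 * p.1 ^ (-s.re) / ((1+p.2)^2 * p.2) := by
            field_simp
            ring
        _ ≤ 4 * p.1 ^ (-s.re) * p.2 ^ (-3:ℝ) := by
            have h3 : p.2^3 ≤ (1+p.2)^2 * p.2 := by nlinarith
            have h4 : p.2 ^ (-3:ℝ) = (p.2^3)⁻¹ := by
              rw [Real.rpow_neg hy0.le, ← Real.rpow_natCast p.2 3]
              norm_num
            rw [h4, ← div_eq_mul_inv]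
            gcongr
    · rw [hFdef, Set.indicator_of_notMem hpT, norm_zero]
      exact hB0
  -- first iterated integral
  have hiter1 : (∫ p, F p ∂μ)
      = ∫ x in Ioi (1:ℝ), ((∫ y in (1:ℝ)..x, R (x/y) * (2*y/(1+y)^2) / y : ℝ) : ℂ)
          * ((x:ℂ)^(-s) / (x:ℂ)) := by
    rw [hμdef, integral_prod _ (by rwa [hμdef] at hFint)]
    refine setIntegral_congr_fun measurableSet_Ioi fun x hx => ?_
    have hx1 : (1:ℝ) < x := hx
    have h1 : ∀ y : ℝ, F (x, y) = (Icc (1:ℝ) x).indicator (fun y => f (x, y)) y := by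
      intro y
      rw [hFdef]
      by_cases h : y ∈ Icc (1:ℝ) x
      · rw [Set.indicator_of_mem h, Set.indicator_of_mem (show (x,y) ∈ T from ⟨h.1, h.2⟩)]
      · rw [Set.indicator_of_notMem h, Set.indicator_of_notMem]
        intro hc
        exact h ⟨hc.1, hc.2⟩
    simp only [h1]
    rw [integral_indicator measurableSet_Icc, Measure.restrict_restrict measurableSet_Icc]
    have h2 : Icc (1:ℝ) x ∩ Ioi 1 = Ioc 1 x := by
      ext t
      simp only [mem_inter_iff, mem_Icc, mem_Ioi, mem_Ioc]
      constructor
      · rintro ⟨⟨_, h2⟩, h3⟩; exact ⟨h3, h2⟩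
      · rintro ⟨h2, h3⟩; exact ⟨⟨h2.le, h3⟩, h2⟩
    rw [h2, hfdef]
    simp only
    rw [integral_mul_const, intervalIntegral.integral_of_le hx1.le]
    congr 1
    exact integral_ofReal
  -- swap
  have hswap : (∫ p, F p ∂μ)
      = ∫ y in Ioi (1:ℝ), ∫ x in Ioi (1:ℝ), F (x, y) := by
    rw [hμdef, integral_prod _ (by rwa [hμdef] at hFint)]
    exact integral_integral_swap (by rwa [hμdef] at hFint)
  -- inner integral in x, for fixed y
  have hiter2 : (∫ y in Ioi (1:ℝ), ∫ x in Ioi (1:ℝ), F (x, y))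
      = ∫ y in Ioi (1:ℝ), (∫ u in Ioi (1:ℝ), (R u : ℂ) * (u:ℂ)^(-s) / (u:ℂ))
          * (2*(y:ℂ)^(-s)/((1+(y:ℂ))^2)) := by
    refine setIntegral_congr_fun measurableSet_Ioi fun y hy => ?_
    have hy1 : (1:ℝ) < y := hy
    have hy0 : (0:ℝ) < y := one_pos.trans hy1
    have hyC : (y:ℂ) ≠ 0 := by simpa using hy0.ne'
    have h1 : ∀ x : ℝ, F (x, y) = (Ici y).indicator (fun x => f (x, y)) x := by
      intro x
      rw [hFdef]
      by_cases h : x ∈ Ici y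
      · rw [Set.indicator_of_mem h, Set.indicator_of_mem (show (x,y) ∈ T from ⟨hy1.le, h⟩)]
      · rw [Set.indicator_of_notMem h, Set.indicator_of_notMem]
        intro hc
        exact h hc.2
    simp only [h1]
    rw [integral_indicator measurableSet_Ici, Measure.restrict_restrict measurableSet_Ici]
    have h2 : Ici y ∩ Ioi 1 = Ici y := by
      apply inter_eq_self_of_subset_left
      exact fun t ht => lt_of_lt_of_le hy1 ht
    rw [h2, integral_Ici_eq_integral_Ioi]
    have hsub := integral_comp_mul_left_Ioi (fun x => f (x, y)) 1 hy0
    rw [mul_one] at hsub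
    have h3 : (∫ x in Ioi y, f (x, y)) = y • ∫ x in Ioi (1:ℝ), f (y * x, y) := by
      rw [hsub, smul_smul, mul_inv_cancel₀ hy0.ne', one_smul]
    rw [h3]
    have h4 : ∀ u ∈ Ioi (1:ℝ), f (y * u, y)
        = ((R u : ℂ) * (u:ℂ)^(-s) / (u:ℂ)) * ((2*(y:ℂ)^(-s)/((1+(y:ℂ))^2)) * (y:ℂ)⁻¹) := by
      intro u hu
      have hu1 : (1:ℝ) < u := hu
      have hu0 : (0:ℝ) < u := one_pos.trans hu1
      have huC : (u:ℂ) ≠ 0 := by simpa using hu0.ne'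
      have h1yC : (1:ℂ) + (y:ℂ) ≠ 0 := by
        intro h
        have := congrArg Complex.re h
        simp at this
        linarith
      rw [hfdef]
      simp only
      rw [show (y * u) / y = u by field_simp]
      have hpow : ((y:ℂ) * (u:ℂ))^(-s) = (y:ℂ)^(-s) * (u:ℂ)^(-s) :=
        Complex.mul_cpow_ofReal_nonneg hy0.le hu0.le _
      push_cast
      rw [hpow]
      field_simp
    rw [setIntegral_congr_fun measurableSet_Ioi h4, integral_mul_const]
    rw [Complex.real_smul]
    have h5 : (1+(y:ℂ))^2 ≠ 0 := by
      apply pow_ne_zero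
      intro h
      have := congrArg Complex.re h
      simp at this
      linarith
    field_simp
  rw [hiter1] at hswap
  rw [hswap, hiter2, ← integral_const_mul]


lemma aux_IBP {s : ℂ} (hs : 1 < s.re) :
    s * (∫ y in Ioi (1:ℝ), 2*(y:ℂ)^(-s)/(1+(y:ℂ)))
      = 1 + ∫ y in Ioi (1:ℝ), 2*(y:ℂ)^(-s)/((1+(y:ℂ))^2) := by
  set G : ℝ → ℂ := fun y => 2 * ((y:ℂ)^(1-s) * (1+(y:ℂ))⁻¹) with hGdef
  set φ : ℝ → ℂ := fun y =>
    -(s * (2*(y:ℂ)^(-s)/(1+(y:ℂ)))) + 2*(y:ℂ)^(-s)/((1+(y:ℂ))^2) with hφdef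
  have hderiv : ∀ y ∈ Ici (1:ℝ), HasDerivAt G (φ y) y := by
    intro y hy
    have hy1 : (1:ℝ) ≤ y := hy
    have hy0 : (0:ℝ) < y := lt_of_lt_of_le one_pos hy1
    have hyC : (y:ℂ) ≠ 0 := by simpa using hy0.ne'
    have h1yC : (1:ℂ) + (y:ℂ) ≠ 0 := aux_one_add_ne hy1
    have hslit : (y:ℂ) ∈ Complex.slitPlane := Or.inl (by simpa using hy0)
    have d1 : HasDerivAt (fun t : ℝ => (t:ℂ)^(1-s)) ((1-s) * (y:ℂ)^(-s)) y := by
      have := ((Complex.hasStrictDerivAt_cpow_const (c := 1-s) hslit).hasDerivAt).comp_ofReal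
      convert this using 2
      ring
    have d2 : HasDerivAt (fun t : ℝ => 1 + (t:ℂ)) 1 y := by
      have : HasDerivAt (fun z : ℂ => 1 + z) 1 (y:ℂ) := by
        simpa using (hasDerivAt_id (y:ℂ)).const_add (1:ℂ)
      exact this.comp_ofReal
    have d3 : HasDerivAt (fun t : ℝ => (1 + (t:ℂ))⁻¹) (-1 / (1+(y:ℂ))^2) y := by
      have hc : HasDerivAt (fun z : ℂ => (1 + z)⁻¹) (-1 / (1+(y:ℂ))^2) (y:ℂ) := by
        have h5 : HasDerivAt (fun z : ℂ => 1 + z) 1 (y:ℂ) := by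
          simpa using (hasDerivAt_id (y:ℂ)).const_add (1:ℂ)
        exact h5.inv h1yC
      exact hc.comp_ofReal
    have d4 := ((d1.mul d3).const_mul (2:ℂ))
    convert d4 using 1
    · rfl
    · rfl
    have hsplit : (y:ℂ)^(1-s) = (y:ℂ) * (y:ℂ)^(-s) := by
      have : (1:ℂ) - s = 1 + (-s) := by ring
      rw [this, Complex.cpow_add _ _ hyC, Complex.cpow_one]
    rw [hφdef, hsplit]
    simp only
    field_simp
    ring
  have htend : Tendsto G atTop (nhds 0) := by
    have htend2 : Tendsto (fun y : ℝ => 2 * y ^ (1 - s.re)) atTop (nhds 0) := by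
      have : Tendsto (fun y : ℝ => y ^ (1 - s.re)) atTop (nhds 0) := by
        have := tendsto_rpow_neg_atTop (by linarith : 0 < s.re - 1)
        simpa [neg_sub] using this
      simpa using this.const_mul (2:ℝ)
    refine squeeze_zero_norm' ?_ htend2
    · filter_upwards [eventually_ge_atTop (1:ℝ)] with y hy1
      have hy0 : (0:ℝ) < y := lt_of_lt_of_le one_pos hy1
      rw [hGdef]
      simp only
      rw [norm_mul, norm_mul, aux_norm_cpow hy0, norm_inv]
      have he : (1 - s).re = 1 - s.re := by simp
      rw [he]
      have h2 : (1:ℝ) ≤ ‖1 + (y:ℂ)‖ := by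
        have : ((1 + y : ℝ) : ℂ) = 1 + (y:ℂ) := by push_cast; ring
        rw [← this, Complex.norm_real, Real.norm_of_nonneg (by linarith)]
        linarith
      have h3 : ‖(1 + (y:ℂ))‖⁻¹ ≤ 1 := by
        rw [inv_le_one_iff₀]; right; exact h2
      have h4 : (0:ℝ) ≤ y ^ (1 - s.re) := by positivity
      calc ‖(2:ℂ)‖ * (y ^ (1 - s.re) * ‖1 + (y:ℂ)‖⁻¹)
          ≤ ‖(2:ℂ)‖ * (y ^ (1 - s.re) * 1) := by gcongr
        _ = 2 * y ^ (1 - s.re) := by simp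
  have hφint : IntegrableOn φ (Ioi 1) := by
    apply Integrable.add
    · exact (((aux_integrable_J hs).const_mul s)).neg
    · exact aux_integrable_K hs
  have hFTC := integral_Ioi_of_hasDerivAt_of_tendsto (a := 1)
    ((hderiv 1 self_mem_Ici).continuousAt.continuousWithinAt)
    (fun x hx => hderiv x (mem_Ici.2 (le_of_lt hx))) hφint htend
  have hG1 : G 1 = 1 := by
    rw [hGdef]
    simp [Complex.one_cpow]
    norm_num
  rw [hG1] at hFTC
  have hsplit2 : ∫ y in Ioi (1:ℝ), φ y
      = -(s * ∫ y in Ioi (1:ℝ), 2*(y:ℂ)^(-s)/(1+(y:ℂ)))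
        + ∫ y in Ioi (1:ℝ), 2*(y:ℂ)^(-s)/((1+(y:ℂ))^2) := by
    have e1 : IntegrableOn (fun y : ℝ => -(s * (2*(y:ℂ)^(-s)/(1+(y:ℂ))))) (Ioi 1) := by
      have := (((aux_integrable_J hs).const_mul s)).neg
      exact this
    rw [hφdef, integral_add e1 (aux_integrable_K hs)]
    congr 1
    rw [integral_neg, integral_const_mul]
  rw [hsplit2] at hFTC
  have := hFTC
  linear_combination -this


lemma aux_subst {s : ℂ} (hs : 1 < s.re) :
    (∫ t in (0:ℝ)..1, 2 * (t:ℂ) ^ (s - 1) / (1 + (t:ℂ)))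
      = ∫ y in Ioi (1:ℝ), 2 * (y:ℂ) ^ (-s) / (1 + (y:ℂ)) := by
  classical
  set f : ℝ → ℂ := fun t => 2 * (t:ℂ) ^ (s - 1) / (1 + (t:ℂ)) with hfdef
  set g : ℝ → ℂ := (Ioo (0:ℝ) 1).indicator f with hgdef
  have key := integral_comp_rpow_Ioi g (p := -1) (by norm_num)
  -- RHS of key is the interval integral
  have hRHS : (∫ y in Ioi (0:ℝ), g y) = ∫ t in (0:ℝ)..1, f t := by
    rw [hgdef, integral_indicator measurableSet_Ioo,
      Measure.restrict_restrict measurableSet_Ioo,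
      show Ioo (0:ℝ) 1 ∩ Ioi 0 = Ioo 0 1 by
        apply inter_eq_self_of_subset_left
        exact fun t ht => ht.1,
      intervalIntegral.integral_of_le zero_le_one, integral_Ioc_eq_integral_Ioo]
  -- LHS of key
  have hLHS : (∫ x in Ioi (0:ℝ), (|(-1:ℝ)| * x ^ ((-1:ℝ) - 1)) • g (x ^ (-1:ℝ)))
      = ∫ y in Ioi (1:ℝ), 2 * (y:ℂ) ^ (-s) / (1 + (y:ℂ)) := by
    have hcong : ∀ x ∈ Ioi (0:ℝ), (|(-1:ℝ)| * x ^ ((-1:ℝ) - 1)) • g (x ^ (-1:ℝ))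
        = (Ioi (1:ℝ)).indicator (fun x => 2 * (x:ℂ) ^ (-s) / (1 + (x:ℂ))) x := by
      intro x hx
      have hx0 : (0:ℝ) < x := hx
      have hxinv : x ^ (-1:ℝ) = x⁻¹ := by
        rw [Real.rpow_neg_one]
      by_cases hx1 : 1 < x
      · have hmem : x ^ (-1:ℝ) ∈ Ioo (0:ℝ) 1 := by
          rw [hxinv]
          constructor
          · positivity
          · exact inv_lt_one_of_one_lt₀ hx1
        rw [hgdef, Set.indicator_of_mem hmem, Set.indicator_of_mem (mem_Ioi.2 hx1), hfdef]
        simp only [hxinv]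
        have hxC : (x:ℂ) ≠ 0 := by simpa using hx0.ne'
        have h1xC : 1 + (x:ℂ) ≠ 0 := by
          intro h
          have := congrArg Complex.re h
          simp at this
          linarith
        have harg : ((x:ℂ)).arg ≠ Real.pi := by
          rw [Complex.arg_ofReal_of_nonneg hx0.le]
          exact (Real.pi_ne_zero).symm
        have e1 : ((x⁻¹ : ℝ) : ℂ) ^ (s-1) = (x:ℂ) ^ (-(s-1)) := by
          rw [Complex.ofReal_inv, Complex.inv_cpow _ _ harg, ← Complex.cpow_neg]
        have e2 : (x:ℂ) ^ (-(s-1)) = (x:ℂ) ^ (-s) * (x:ℂ) := by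
          rw [show -(s-1) = -s + 1 by ring, Complex.cpow_add _ _ hxC, Complex.cpow_one]
        have e3 : (1 : ℂ) + ((x⁻¹ : ℝ) : ℂ) = (1 + (x:ℂ)) / (x:ℂ) := by
          push_cast
          field_simp
          ring
        have e4 : (|(-1:ℝ)| * x ^ ((-1:ℝ) - 1)) = (x^2)⁻¹ := by
          rw [abs_neg, abs_one, one_mul, show (-1:ℝ) - 1 = -2 by norm_num,
            Real.rpow_neg hx0.le, ← Real.rpow_natCast x 2]
          norm_num
        rw [e1, e2, e3, e4, Complex.real_smul]
        push_cast
        field_simp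
      · have hmem : x ^ (-1:ℝ) ∉ Ioo (0:ℝ) 1 := by
          rw [hxinv]
          intro hmem
          have h5 : x⁻¹ * x = 1 := inv_mul_cancel₀ hx0.ne'
          push_neg at hx1
          nlinarith [hmem.2, hx0, hx1]
        rw [hgdef, Set.indicator_of_notMem hmem, Set.indicator_of_notMem (by simpa using hx1),
          smul_zero]
    rw [setIntegral_congr_fun measurableSet_Ioi hcong, integral_indicator measurableSet_Ioi,
      Measure.restrict_restrict measurableSet_Ioi,
      show Ioi (1:ℝ) ∩ Ioi 0 = Ioi 1 by
        apply inter_eq_self_of_subset_left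
        exact fun t ht => mem_Ioi.2 (lt_trans one_pos (mem_Ioi.1 ht))]
  rw [← hRHS, ← key, hLHS]

end Aux

open Set Filter in
theorem stmt8 (R : ℝ → ℝ) (hR : IsResolvent R)
    (hRbd : ∀ y : ℝ, 1 ≤ y → |R y| ≤ 2 * y)
    (s : ℂ) (hs : 1 < s.re) :
    (∫ y in Set.Ioi (1 : ℝ), (R y : ℂ) * (y : ℂ) ^ (-s) / (y : ℂ)) =
        (∫ y in Set.Ioi (1 : ℝ), 2 * (y : ℂ) ^ (-s) / ((1 + (y : ℂ)) ^ 2)) /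
          (1 + ∫ y in Set.Ioi (1 : ℝ), 2 * (y : ℂ) ^ (-s) / ((1 + (y : ℂ)) ^ 2)) ∧
      (∫ y in Set.Ioi (1 : ℝ), (R y : ℂ) * (y : ℂ) ^ (-s) / (y : ℂ)) =
        1 - 1 / (s * ∫ t in (0 : ℝ)..1, 2 * (t : ℂ) ^ (s - 1) / (1 + (t : ℂ))) := by
  obtain ⟨hRc, hReq⟩ := hR
  set M : ℂ := ∫ y in Set.Ioi (1 : ℝ), (R y : ℂ) * (y : ℂ) ^ (-s) / (y : ℂ) with hMdef
  set K : ℂ := ∫ y in Set.Ioi (1 : ℝ), 2 * (y : ℂ) ^ (-s) / ((1 + (y : ℂ)) ^ 2) with hKdef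
  have hK1 : (1:ℂ) + K ≠ 0 := aux_one_add_K_ne hs
  -- pointwise identity for the convolution term
  have hG : ∀ x ∈ Ioi (1:ℝ),
      ((∫ y in (1:ℝ)..x, R (x/y) * (2*y/(1+y)^2) / y : ℝ) : ℂ) * ((x:ℂ)^(-s) / (x:ℂ))
        = 2*(x:ℂ)^(-s)/((1+(x:ℂ))^2) - (R x : ℂ) * (x:ℂ)^(-s) / (x:ℂ) := by
    intro x hx
    have hx1 : (1:ℝ) < x := hx
    have hx0 : (0:ℝ) < x := one_pos.trans hx1
    have hxC : (x:ℂ) ≠ 0 := by simpa using hx0.ne'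
    have h1xC : (1:ℂ) + (x:ℂ) ≠ 0 := aux_one_add_ne hx1.le
    have heq := hReq x hx1.le
    have hGval : (∫ y in (1:ℝ)..x, R (x/y) * (2*y/(1+y)^2) / y) = 2*x/(1+x)^2 - R x := by
      linarith
    rw [hGval]
    push_cast
    field_simp
  -- Mellin transform of the resolvent equation
  have hMK : M * K = K - M := by
    have h1 := aux_fubini hRc hRbd hs
    rw [setIntegral_congr_fun measurableSet_Ioi hG] at h1
    have h2 : IntegrableOn (fun x : ℝ => 2*(x:ℂ)^(-s)/((1+(x:ℂ))^2)) (Ioi 1) :=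
      aux_integrable_K hs
    have h3 : IntegrableOn (fun x : ℝ => (R x : ℂ) * (x:ℂ)^(-s) / (x:ℂ)) (Ioi 1) :=
      aux_integrable_M hRc hRbd hs
    rw [integral_sub h2 h3] at h1
    rw [hMdef, hKdef]
    rw [← h1]
  have hpart1 : M = K / (1 + K) := by
    have : M * (1 + K) = K := by
      rw [mul_add, mul_one, hMK]
      ring
    field_simp [hK1]
    linear_combination this
  refine ⟨hpart1, ?_⟩
  have hsub := aux_subst (s := s) hs
  have hIBP := aux_IBP (s := s) hs
  rw [hsub]
  rw [show s * (∫ y in Ioi (1:ℝ), 2*(y:ℂ)^(-s)/(1+(y:ℂ))) = 1 + K from hIBP]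
  rw [hpart1]
  field_simp
  ring
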